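/- Let M be an F_q[[T]]-submodule of F = F_q[[T]]^d with dim_{F_q}(F/M) finite. Then there exist unique nonnegative integers n_1,…,n_d such that LT(M) is the submodule generated by T^{n_1}u_1,…,T^{n_d}u_d, and moreover dim_{F_q}(F/M) = dim_{F_q}(F/LT(M)) = n_1 + ⋯ + n_d. -/

import Mathlib

namespace Spiral

/-- Monomials `T^n u_i` of `F = F_q[[T]]^d` (seat `i` 0-indexed) are encoded by the
natural number `n*d + i`; the usual order on encodings is exactly the hlex order
`T^a u_i ≺ T^b u_j ↔ a < b ∨ (a = b ∧ i < j)`. `leadPos f` is the encoding of the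
`≺`-least monomial appearing in `f` with nonzero coefficient (for `f ≠ 0`). -/
noncomputable def leadPos (d : ℕ) [NeZero d] {Fq : Type*} [Field Fq]
    (f : Fin d → PowerSeries Fq) : ℕ :=
  sInf {p : ℕ | PowerSeries.coeff (p / d) (f ⟨p % d, Nat.mod_lt p (NeZero.pos d)⟩) ≠ 0}

/-- The leading term `LT(f)` of `f ∈ F = F_q[[T]]^d`: the term of `f` supported on its
`≺`-least monomial `T^n u_i` with nonzero coefficient (where `≺` is the hlex order). -/
noncomputable def LTerm (d : ℕ) [NeZero d] {Fq : Type*} [Field Fq]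
    (f : Fin d → PowerSeries Fq) : Fin d → PowerSeries Fq :=
  Pi.single ⟨leadPos d f % d, Nat.mod_lt _ (NeZero.pos d)⟩
    (PowerSeries.monomial (leadPos d f / d)
      (PowerSeries.coeff (leadPos d f / d)
        (f ⟨leadPos d f % d, Nat.mod_lt _ (NeZero.pos d)⟩)))

/-- The leading submodule `LT(M)`: the `F_q[[T]]`-submodule of `F` generated by the
leading terms `LT(f)` of the nonzero elements `f ∈ M`. -/
noncomputable def LTsub (d : ℕ) [NeZero d] {Fq : Type*} [Field Fq]
    (M : Submodule (PowerSeries Fq) (Fin d → PowerSeries Fq)) :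
    Submodule (PowerSeries Fq) (Fin d → PowerSeries Fq) :=
  Submodule.span (PowerSeries Fq) {g | ∃ f ∈ M, f ≠ 0 ∧ LTerm d f = g}

/-- The standard monomial `T^n u_i ∈ F = F_q[[T]]^d`. -/
noncomputable def stdMono (d : ℕ) {Fq : Type*} [Field Fq] (n : ℕ) (i : Fin d) :
    Fin d → PowerSeries Fq :=
  Pi.single i ((PowerSeries.monomial n) 1)

end Spiral

/-!
Since `F/M` is finite-dimensional over `F_q`, `T^K F ⊆ M` for some `K`. Let `nᵢ` be the least
`n` such that `T^n uᵢ` is the leading monomial of a nonzero element of `M`; multiplying such an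
element by powers of `T` shows that `LT(M)` is exactly `{f | T^{nᵢ} ∣ fᵢ for all i}`.
The standard monomials `T^k uᵢ` with `k < nᵢ` span an `F_q`-complement of `M`: a nonzero
combination of them has a standard leading monomial, so it is not in `M`, and every `f` is
reduced modulo `M` and these monomials by repeatedly cancelling its leading coefficient, which
terminates once the leading position passes `T^K`. Hence `dim F/M = ∑ nᵢ`, and the same count
applies to `LT(M)`, whose leading exponents are again the `nᵢ`.
-/

namespace Spiral

open PowerSeries

variable {d : ℕ} {Fq : Type*} [Field Fq]

lemma linearIndependent_monomial_one :
    LinearIndependent Fq fun n : ℕ => (monomial n (1 : Fq) : PowerSeries Fq) := by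
  classical
  refine linearIndependent_iff'.2 fun s g hg n hn => ?_
  simpa [coeff_monomial, hn] using congrArg (coeff n) hg

lemma stdMono_ne_zero (n : ℕ) (i : Fin d) : (stdMono d n i : Fin d → PowerSeries Fq) ≠ 0 := by
  simp [stdMono, ← X_pow_eq]

lemma stdMono_eq_X_pow_smul (n : ℕ) (i : Fin d) :
    (stdMono d n i : Fin d → PowerSeries Fq) = (X : PowerSeries Fq) ^ n • Pi.single i 1 := by
  rw [stdMono, ← Pi.single_smul, smul_eq_mul, mul_one, X_pow_eq]

variable (d Fq) in
noncomputable def monomialSubmodule (ns : Fin d → ℕ) :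
    Submodule (PowerSeries Fq) (Fin d → PowerSeries Fq) :=
  Submodule.pi Set.univ fun i => Ideal.span {X ^ ns i}

lemma mem_monomialSubmodule {ns : Fin d → ℕ} {f : Fin d → PowerSeries Fq} :
    f ∈ monomialSubmodule d Fq ns ↔ ∀ i, (X : PowerSeries Fq) ^ ns i ∣ f i := by
  simp [monomialSubmodule, Submodule.mem_pi, Ideal.mem_span_singleton]

lemma span_stdMono_eq_monomialSubmodule (ns : Fin d → ℕ) :
    Submodule.span (PowerSeries Fq) (Set.range fun i => stdMono d (ns i) i) =
      monomialSubmodule d Fq ns := by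
  classical
  rw [monomialSubmodule, ← Submodule.iSup_map_single, Submodule.span_range_eq_iSup]
  congr! with i
  rw [Submodule.map_span, Set.image_singleton, LinearMap.coe_single, stdMono, X_pow_eq]

lemma stdMono_mem_monomialSubmodule (ns : Fin d → ℕ) (i : Fin d) :
    (stdMono d (ns i) i : Fin d → PowerSeries Fq) ∈ monomialSubmodule d Fq ns := by
  rw [← span_stdMono_eq_monomialSubmodule]
  exact Submodule.subset_span ⟨i, rfl⟩

lemma stdMono_mem_monomialSubmodule_of_le {ns : Fin d → ℕ} {n : ℕ} {i : Fin d}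
    (h : ns i ≤ n) :
    (stdMono d n i : Fin d → PowerSeries Fq) ∈ monomialSubmodule d Fq ns := by
  obtain ⟨k, rfl⟩ := Nat.exists_eq_add_of_le h
  rw [stdMono_eq_X_pow_smul, add_comm, pow_add, mul_smul, ← stdMono_eq_X_pow_smul]
  exact Submodule.smul_mem _ _ (stdMono_mem_monomialSubmodule ns i)

lemma monomialSubmodule_anti {ns ms : Fin d → ℕ} (h : ns ≤ ms) :
    monomialSubmodule d Fq ms ≤ monomialSubmodule d Fq ns := fun _ hf =>
  mem_monomialSubmodule.2 fun i => (pow_dvd_pow X (h i)).trans (mem_monomialSubmodule.1 hf i)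

lemma monomialSubmodule_injective : Function.Injective (monomialSubmodule d Fq) := by
  have hX : ¬ IsUnit (X : PowerSeries Fq) := by simp [isUnit_iff_constantCoeff]
  have key : ∀ {ns ms}, monomialSubmodule d Fq ns = monomialSubmodule d Fq ms → ns ≤ ms :=
    fun {ns ms} h i => by
      have := mem_monomialSubmodule.1 (h ▸ stdMono_mem_monomialSubmodule ms i) i
      rwa [stdMono, Pi.single_eq_same, ← X_pow_eq, pow_dvd_pow_iff X_ne_zero hX] at this
  exact fun ns ms h => le_antisymm (key h) (key h.symm)

lemma exists_X_pow_smul_eq_zero {V : Type*} [AddCommGroup V] [Module (PowerSeries Fq) V]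
    [Module Fq V] [IsScalarTower Fq (PowerSeries Fq) V] [Module.Finite Fq V] (v : V) :
    ∃ m : ℕ, (X : PowerSeries Fq) ^ m • v = 0 := by
  classical
  set r := Module.finrank Fq V
  obtain ⟨c, hc, j, hj⟩ : ∃ c : Fin (r + 1) → Fq,
      ∑ i, c i • (X : PowerSeries Fq) ^ (i : ℕ) • v = 0 ∧ ∃ j, c j ≠ 0 := by
    have : ¬ LinearIndependent Fq fun i : Fin (r + 1) => (X : PowerSeries Fq) ^ (i : ℕ) • v :=
      fun h => by simpa [r] using h.fintype_card_le_finrank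
    simpa [Fintype.not_linearIndependent_iff] using this
  set P : PowerSeries Fq := ∑ i, C (c i) * X ^ (i : ℕ)
  have hP : P ≠ 0 := fun h => hj <| by
    simpa [P, coeff_X_pow, Fin.val_inj] using congrArg (coeff (j : ℕ)) h
  have hPv : P • v = 0 := by
    simp only [P, Finset.sum_smul, mul_smul, C_eq_algebraMap, algebraMap_smul, hc]
  refine ⟨P.order.toNat, (isUnit_divided_by_X_pow_order hP).smul_left_cancel.1 ?_⟩
  rw [smul_zero, smul_smul, mul_comm, X_pow_order_mul_divXPowOrder, hPv]

lemma exists_monomialSubmodule_const_le (M : Submodule (PowerSeries Fq) (Fin d → PowerSeries Fq))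
    (hM : Module.Finite Fq ((Fin d → PowerSeries Fq) ⧸ M)) :
    ∃ K : ℕ, monomialSubmodule d Fq (fun _ => K) ≤ M := by
  classical
  choose m hm using fun i : Fin d =>
    exists_X_pow_smul_eq_zero (Fq := Fq) (Submodule.Quotient.mk (p := M) (Pi.single i 1))
  refine ⟨Finset.univ.sup m, ?_⟩
  rw [← span_stdMono_eq_monomialSubmodule, Submodule.span_le]
  rintro _ ⟨i, rfl⟩
  obtain ⟨k, hk⟩ := Nat.exists_eq_add_of_le (Finset.le_sup (f := m) (Finset.mem_univ i))
  dsimp only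
  rw [SetLike.mem_coe, ← Submodule.Quotient.mk_eq_zero, stdMono_eq_X_pow_smul,
    Submodule.Quotient.mk_smul, hk, pow_add, mul_comm, mul_smul, hm i, smul_zero]

variable (d Fq) in
noncomputable def staircase (ns : Fin d → ℕ) : Submodule Fq (Fin d → PowerSeries Fq) :=
  Submodule.span Fq (Set.range fun x : Σ i, Fin (ns i) => stdMono d x.2 x.1)

lemma finrank_staircase (ns : Fin d → ℕ) :
    Module.finrank Fq (staircase d Fq ns) = ∑ i, ns i := by
  have hli : LinearIndependent Fq fun x : Σ i, Fin (ns i) =>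
      (stdMono d x.2 x.1 : Fin d → PowerSeries Fq) :=
    Pi.linearIndependent_single (fun i (k : Fin (ns i)) => monomial (k : ℕ) (1 : Fq))
      fun _ => linearIndependent_monomial_one.comp _ Fin.val_injective
  rw [staircase, finrank_span_eq_card hli, Fintype.card_sigma]
  simp

variable [NeZero d]

noncomputable def coeffAt (p : ℕ) : (Fin d → PowerSeries Fq) →ₗ[Fq] Fq :=
  (coeff (p / d)).comp (LinearMap.proj (Fin.ofNat d p))

lemma coeffAt_apply (p : ℕ) (f : Fin d → PowerSeries Fq) :
    coeffAt p f = coeff (p / d) (f (Fin.ofNat d p)) := rfl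

lemma ofNat_mul_add (n : ℕ) (i : Fin d) : Fin.ofNat d (n * d + i) = i := by
  ext; simp [Nat.mod_eq_of_lt i.isLt]

lemma mul_add_val_div (n : ℕ) (i : Fin d) : (n * d + i) / d = n := by
  rw [mul_comm, Nat.mul_add_div (NeZero.pos d), Nat.div_eq_of_lt i.isLt, add_zero]

lemma div_mul_add_ofNat (p : ℕ) : p / d * d + Fin.ofNat d p = p := by
  rw [Fin.val_ofNat, mul_comm]; exact Nat.div_add_mod p d

lemma eq_mul_add_iff {p n : ℕ} {i : Fin d} :
    p = n * d + i ↔ p / d = n ∧ Fin.ofNat d p = i := by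
  constructor
  · rintro rfl; exact ⟨mul_add_val_div n i, ofNat_mul_add n i⟩
  · rintro ⟨rfl, rfl⟩; exact (div_mul_add_ofNat p).symm

lemma coeffAt_mul_add (f : Fin d → PowerSeries Fq) (n : ℕ) (i : Fin d) :
    coeffAt (n * d + i) f = coeff n (f i) := by
  rw [coeffAt_apply, mul_add_val_div, ofNat_mul_add]

lemma exists_coeffAt_ne_zero {f : Fin d → PowerSeries Fq} (hf : f ≠ 0) :
    ∃ p, coeffAt p f ≠ 0 := by
  contrapose! hf
  ext i n
  simpa [coeffAt_mul_add] using hf (n * d + i)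

lemma coeffAt_leadPos_ne_zero {f : Fin d → PowerSeries Fq} (hf : f ≠ 0) :
    coeffAt (leadPos d f) f ≠ 0 :=
  Nat.sInf_mem (exists_coeffAt_ne_zero hf)

lemma coeffAt_eq_zero_of_lt_leadPos {f : Fin d → PowerSeries Fq} {p : ℕ}
    (hp : p < leadPos d f) : coeffAt p f = 0 := by
  by_contra h
  exact (Nat.sInf_le h).not_gt hp

lemma leadPos_eq_of_coeffAt {f : Fin d → PowerSeries Fq} {p : ℕ} (hp : coeffAt p f ≠ 0)
    (hlt : ∀ q < p, coeffAt q f = 0) : leadPos d f = p :=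
  le_antisymm (Nat.sInf_le hp) (le_csInf ⟨p, hp⟩ fun _ hq => not_lt.1 (mt (hlt _) hq))

lemma coeffAt_stdMono (n : ℕ) (i : Fin d) (p : ℕ) :
    coeffAt p (stdMono d n i : Fin d → PowerSeries Fq) = if p = n * d + i then 1 else 0 := by
  simp only [coeffAt_apply, stdMono, Pi.single_apply, eq_mul_add_iff]
  split_ifs with hi hn hn
  · rw [hn.1, coeff_monomial_same]
  · rw [coeff_monomial, if_neg fun h => hn ⟨h, hi⟩]
  · exact absurd hn.2 hi
  · exact map_zero _

lemma leadPos_stdMono (n : ℕ) (i : Fin d) :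
    leadPos d (stdMono d n i : Fin d → PowerSeries Fq) = n * d + i :=
  leadPos_eq_of_coeffAt (by simp [coeffAt_stdMono]) fun q hq => by
    rw [coeffAt_stdMono, if_neg hq.ne]

lemma coeffAt_X_pow_smul_add (m : ℕ) (f : Fin d → PowerSeries Fq) (p : ℕ) :
    coeffAt (p + m * d) ((X : PowerSeries Fq) ^ m • f) = coeffAt p f := by
  have hidx : Fin.ofNat d (p + m * d) = Fin.ofNat d p := by ext; simp
  rw [coeffAt_apply, coeffAt_apply, hidx, Nat.add_mul_div_right _ _ (NeZero.pos d), Pi.smul_apply,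
    smul_eq_mul, coeff_X_pow_mul]

lemma coeffAt_X_pow_smul_of_lt {m p : ℕ} (f : Fin d → PowerSeries Fq) (hp : p < m * d) :
    coeffAt p ((X : PowerSeries Fq) ^ m • f) = 0 := by
  have hpd : ¬ m ≤ p / d := by rw [Nat.le_div_iff_mul_le (NeZero.pos d)]; omega
  rw [coeffAt_apply, Pi.smul_apply, smul_eq_mul, coeff_X_pow_mul', if_neg hpd]

lemma leadPos_X_pow_smul (m : ℕ) {f : Fin d → PowerSeries Fq} (hf : f ≠ 0) :
    leadPos d ((X : PowerSeries Fq) ^ m • f) = leadPos d f + m * d := by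
  refine leadPos_eq_of_coeffAt (by rw [coeffAt_X_pow_smul_add]; exact coeffAt_leadPos_ne_zero hf) ?_
  intro q hq
  rcases lt_or_ge q (m * d) with hqm | hqm
  · exact coeffAt_X_pow_smul_of_lt f hqm
  · obtain ⟨r, rfl⟩ := Nat.exists_eq_add_of_le' hqm
    rw [coeffAt_X_pow_smul_add]
    exact coeffAt_eq_zero_of_lt_leadPos (by omega)

lemma le_leadPos_div_of_mem_monomialSubmodule {ns : Fin d → ℕ} {f : Fin d → PowerSeries Fq}
    (hf : f ∈ monomialSubmodule d Fq ns) (hf0 : f ≠ 0) :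
    ns (Fin.ofNat d (leadPos d f)) ≤ leadPos d f / d := by
  by_contra h
  exact coeffAt_leadPos_ne_zero hf0
    (X_pow_dvd_iff.1 (mem_monomialSubmodule.1 hf _) _ (not_le.1 h))

lemma coeffAt_eq_zero_of_mem_staircase {ns : Fin d → ℕ} {f : Fin d → PowerSeries Fq}
    (hf : f ∈ staircase d Fq ns) {p : ℕ} (hp : ns (Fin.ofNat d p) ≤ p / d) :
    coeffAt p f = 0 := by
  suffices staircase d Fq ns ≤ LinearMap.ker (coeffAt p) from this hf
  rw [staircase, Submodule.span_le]
  rintro _ ⟨⟨i, k⟩, rfl⟩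
  rw [SetLike.mem_coe, LinearMap.mem_ker, coeffAt_stdMono, if_neg]
  rintro rfl
  rw [mul_add_val_div, ofNat_mul_add] at hp
  exact k.isLt.not_ge hp

lemma mem_monomialSubmodule_const_of_coeffAt_eq_zero {K : ℕ} {f : Fin d → PowerSeries Fq}
    (hf : ∀ q < K * d, coeffAt q f = 0) : f ∈ monomialSubmodule d Fq (fun _ => K) :=
  mem_monomialSubmodule.2 fun i => X_pow_dvd_iff.2 fun m hm => by
    have hmK := Nat.mul_le_mul_right d (Nat.succ_le_of_lt hm)
    rw [← coeffAt_mul_add]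
    exact hf _ (by rw [Nat.succ_mul] at hmK; omega)

lemma eq_top_of_forall_exists_leadPos_eq {T : Submodule Fq (Fin d → PowerSeries Fq)} (B : ℕ)
    (htail : ∀ f, (∀ q < B, coeffAt q f = 0) → f ∈ T)
    (hpivot : ∀ p < B, ∃ g ∈ T, g ≠ 0 ∧ leadPos d g = p) : T = ⊤ := by
  suffices h : ∀ j f, (∀ q < B - j, coeffAt q f = 0) → f ∈ T from
    eq_top_iff.2 fun f _ => h B f (by simp)
  intro j
  induction j with
  | zero => exact htail
  | succ j ih =>
    intro f hf
    rcases le_or_gt B j with hBj | hjB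
    · exact ih f fun q hq => by omega
    obtain ⟨g, hgT, hg0, hgp⟩ := hpivot (B - (j + 1)) (by omega)
    rw [← hgp] at hf
    obtain ⟨c, hc⟩ : ∃ c, coeffAt (leadPos d g) f = c * coeffAt (leadPos d g) g :=
      ⟨_, (div_mul_cancel₀ _ (coeffAt_leadPos_ne_zero hg0)).symm⟩
    have hfg : f - c • g ∈ T := by
      refine ih _ fun q hq => ?_
      rw [map_sub, map_smul, smul_eq_mul, sub_eq_zero]
      rcases lt_or_eq_of_le (show q ≤ leadPos d g by omega) with hq' | rfl
      · rw [hf q hq', coeffAt_eq_zero_of_lt_leadPos hq', mul_zero]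
      · exact hc
    simpa using T.add_mem hfg (T.smul_mem c hgT)

-- `sInf ∅ = 0`; the set is nonempty once `T^K F ⊆ N` (`exists_leadPos_eq_leadExp`).
noncomputable def leadExp (N : Submodule (PowerSeries Fq) (Fin d → PowerSeries Fq))
    (i : Fin d) : ℕ :=
  sInf {n | ∃ f ∈ N, f ≠ 0 ∧ leadPos d f = n * d + i}

variable {N : Submodule (PowerSeries Fq) (Fin d → PowerSeries Fq)} {K : ℕ}

lemma leadExp_le_leadPos_div {f : Fin d → PowerSeries Fq} (hf : f ∈ N) (hf0 : f ≠ 0) :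
    leadExp N (Fin.ofNat d (leadPos d f)) ≤ leadPos d f / d :=
  Nat.sInf_le ⟨f, hf, hf0, (div_mul_add_ofNat _).symm⟩

lemma exists_leadPos_eq_leadExp (hK : monomialSubmodule d Fq (fun _ => K) ≤ N)
    (i : Fin d) : ∃ f ∈ N, f ≠ 0 ∧ leadPos d f = leadExp N i * d + i :=
  Nat.sInf_mem (s := {n | ∃ f ∈ N, f ≠ 0 ∧ leadPos d f = n * d + i})
    ⟨K, stdMono d K i, hK (stdMono_mem_monomialSubmodule _ i), stdMono_ne_zero K i,
    leadPos_stdMono K i⟩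

lemma LTerm_eq_smul_stdMono (f : Fin d → PowerSeries Fq) :
    LTerm d f = coeffAt (leadPos d f) f •
      stdMono d (leadPos d f / d) (Fin.ofNat d (leadPos d f)) := by
  rw [LTerm, stdMono, ← Pi.single_smul, ← map_smul, smul_eq_mul, mul_one]
  rfl

lemma LTsub_eq_monomialSubmodule (hK : monomialSubmodule d Fq (fun _ => K) ≤ N) :
    LTsub d N = monomialSubmodule d Fq (leadExp N) := by
  apply le_antisymm
  · rw [LTsub, Submodule.span_le]
    rintro _ ⟨f, hf, hf0, rfl⟩
    rw [SetLike.mem_coe, LTerm_eq_smul_stdMono]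
    exact Submodule.smul_of_tower_mem _ _
      (stdMono_mem_monomialSubmodule_of_le (leadExp_le_leadPos_div hf hf0))
  · rw [← span_stdMono_eq_monomialSubmodule, Submodule.span_le]
    rintro _ ⟨i, rfl⟩
    obtain ⟨f, hf, hf0, hpos⟩ := exists_leadPos_eq_leadExp hK i
    have hLT : stdMono d (leadExp N i) i = (coeffAt (leadPos d f) f)⁻¹ • LTerm d f := by
      rw [LTerm_eq_smul_stdMono, smul_smul, inv_mul_cancel₀ (coeffAt_leadPos_ne_zero hf0),
        one_smul, hpos, mul_add_val_div, ofNat_mul_add]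
    simp only [SetLike.mem_coe, hLT]
    exact Submodule.smul_of_tower_mem _ _ (Submodule.subset_span ⟨f, hf, hf0, rfl⟩)

lemma leadExp_monomialSubmodule (ns : Fin d → ℕ) :
    leadExp (monomialSubmodule d Fq ns) = ns := by
  funext i
  have hmem :
      ns i ∈ {n | ∃ f ∈ monomialSubmodule d Fq ns, f ≠ 0 ∧ leadPos d f = n * d + i} :=
    ⟨_, stdMono_mem_monomialSubmodule ns i, stdMono_ne_zero _ i, leadPos_stdMono _ i⟩
  refine le_antisymm (Nat.sInf_le hmem) (le_csInf ⟨_, hmem⟩ ?_)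
  rintro n ⟨f, hf, hf0, hpos⟩
  have := le_leadPos_div_of_mem_monomialSubmodule hf hf0
  rwa [hpos, mul_add_val_div, ofNat_mul_add] at this

lemma disjoint_staircase_leadExp :
    Disjoint (N.restrictScalars Fq) (staircase d Fq (leadExp N)) := by
  refine Submodule.disjoint_def.2 fun f hfN hf => ?_
  by_contra hf0
  exact coeffAt_leadPos_ne_zero hf0
    (coeffAt_eq_zero_of_mem_staircase hf (leadExp_le_leadPos_div hfN hf0))

lemma exists_leadPos_eq_of_monomialSubmodule_le
    (hK : monomialSubmodule d Fq (fun _ => K) ≤ N) (p : ℕ) :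
    ∃ g ∈ N.restrictScalars Fq ⊔ staircase d Fq (leadExp N), g ≠ 0 ∧ leadPos d g = p := by
  set i := Fin.ofNat d p
  have hp : p / d * d + i = p := div_mul_add_ofNat p
  rcases lt_or_ge (p / d) (leadExp N i) with hk | hk
  · exact ⟨stdMono d (p / d) i,
      Submodule.mem_sup_right (Submodule.subset_span ⟨⟨i, ⟨_, hk⟩⟩, rfl⟩),
      stdMono_ne_zero _ i, by rw [leadPos_stdMono, hp]⟩
  · obtain ⟨w, hw, hw0, hwp⟩ := exists_leadPos_eq_leadExp hK i
    obtain ⟨m, hm⟩ := Nat.exists_eq_add_of_le hk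
    refine ⟨(X : PowerSeries Fq) ^ m • w, Submodule.mem_sup_left (N.smul_mem _ hw),
      smul_ne_zero (pow_ne_zero _ X_ne_zero) hw0, ?_⟩
    rw [leadPos_X_pow_smul m hw0, hwp, ← hp, hm]
    ring

lemma sup_staircase_leadExp_eq_top (hK : monomialSubmodule d Fq (fun _ => K) ≤ N) :
    N.restrictScalars Fq ⊔ staircase d Fq (leadExp N) = ⊤ :=
  eq_top_of_forall_exists_leadPos_eq (K * d)
    (fun _ hf => Submodule.mem_sup_left (hK (mem_monomialSubmodule_const_of_coeffAt_eq_zero hf)))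
    (fun p _ => exists_leadPos_eq_of_monomialSubmodule_le hK p)

theorem finrank_quotient_eq_sum_leadExp (hK : monomialSubmodule d Fq (fun _ => K) ≤ N) :
    Module.finrank Fq ((Fin d → PowerSeries Fq) ⧸ N) = ∑ i, leadExp N i := by
  have hcompl : IsCompl (N.restrictScalars Fq) (staircase d Fq (leadExp N)) :=
    ⟨disjoint_staircase_leadExp, codisjoint_iff.2 (sup_staircase_leadExp_eq_top hK)⟩
  rw [← (Submodule.Quotient.restrictScalarsEquiv Fq N).finrank_eq,
    (Submodule.quotientEquivOfIsCompl _ _ hcompl).finrank_eq, finrank_staircase]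

theorem finrank_quotient_monomialSubmodule (ns : Fin d → ℕ) :
    Module.finrank Fq ((Fin d → PowerSeries Fq) ⧸ monomialSubmodule d Fq ns) = ∑ i, ns i := by
  have hK : monomialSubmodule d Fq (fun _ => Finset.univ.sup ns) ≤ monomialSubmodule d Fq ns :=
    monomialSubmodule_anti fun i => Finset.le_sup (Finset.mem_univ i)
  rw [finrank_quotient_eq_sum_leadExp hK, leadExp_monomialSubmodule]

end Spiral

open Spiral in
theorem statement17_general (d : ℕ) [NeZero d] (Fq : Type*) [Field Fq]
    (M : Submodule (PowerSeries Fq) (Fin d → PowerSeries Fq))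
    (hM : Module.Finite Fq ((Fin d → PowerSeries Fq) ⧸ M)) :
    (∃! ns : Fin d → ℕ, LTsub d M =
      Submodule.span (PowerSeries Fq) (Set.range fun i => stdMono d (ns i) i)) ∧
    Module.finrank Fq ((Fin d → PowerSeries Fq) ⧸ M) =
      Module.finrank Fq ((Fin d → PowerSeries Fq) ⧸ LTsub d M) ∧
    ∀ ns : Fin d → ℕ,
      LTsub d M =
        Submodule.span (PowerSeries Fq) (Set.range fun i => stdMono d (ns i) i) →
      Module.finrank Fq ((Fin d → PowerSeries Fq) ⧸ M) = ∑ i, ns i := by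
  obtain ⟨K, hK⟩ := exists_monomialSubmodule_const_le M hM
  have hLT := LTsub_eq_monomialSubmodule hK
  have hdim := finrank_quotient_eq_sum_leadExp hK
  have huniq : ∀ ns : Fin d → ℕ, LTsub d M =
      Submodule.span (PowerSeries Fq) (Set.range fun i => stdMono d (ns i) i) → ns = leadExp M :=
    fun ns h => monomialSubmodule_injective (d := d) (Fq := Fq) <| by
      rw [← span_stdMono_eq_monomialSubmodule, ← h, hLT]
  refine ⟨⟨leadExp M, hLT.trans (span_stdMono_eq_monomialSubmodule _).symm, huniq⟩, ?_,
    fun ns h => huniq ns h ▸ hdim⟩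
  rw [hdim, hLT, finrank_quotient_monomialSubmodule]

open Spiral in
/-- Let `M` be an `F_q[[T]]`-submodule of `F = F_q[[T]]^d` with
`dim_{F_q}(F/M)` finite. Then there exist unique `n₁,…,n_d ∈ ℕ` such that `LT(M)` is the
submodule generated by `T^{n₁}u₁,…,T^{n_d}u_d`, and moreover
`dim_{F_q}(F/M) = dim_{F_q}(F/LT(M)) = n₁ + ⋯ + n_d`. -/
theorem statement17 (d : ℕ) [NeZero d] (Fq : Type*) [Field Fq] [Fintype Fq]
    (M : Submodule (PowerSeries Fq) (Fin d → PowerSeries Fq))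
    (hM : Module.Finite Fq ((Fin d → PowerSeries Fq) ⧸ M)) :
    (∃! ns : Fin d → ℕ, LTsub d M =
      Submodule.span (PowerSeries Fq) (Set.range fun i => stdMono d (ns i) i)) ∧
    Module.finrank Fq ((Fin d → PowerSeries Fq) ⧸ M) =
      Module.finrank Fq ((Fin d → PowerSeries Fq) ⧸ LTsub d M) ∧
    ∀ ns : Fin d → ℕ,
      LTsub d M =
        Submodule.span (PowerSeries Fq) (Set.range fun i => stdMono d (ns i) i) →
      Module.finrank Fq ((Fin d → PowerSeries Fq) ⧸ M) = ∑ i, ns i :=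
  statement17_general d Fq M hM
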